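/- arXiv:2105.01413 — 2 statements merged into one kernel-verified Lean document; each statement's English description precedes it below -/
import Mathlib

section
/- Let r and w be positive integers and let G be a digraph. If (T, δ) is a branch decomposition of G of bi-mim-width at most w, then (T, δ), regarded as a branch decomposition of G^r, has bi-mim-width at most r·w. In particular, bimimw(G^r) ≤ r·bimimw(G). -/
open scoped Classical

/-- An induced matching in a digraph with edge relation `D`: a finite set of edges of `D`,
no two of which share an endpoint, such that no edge of `D` joins an endpoint of one
matching edge to an endpoint of a different matching edge. -/
def IsIndMatching {V : Type} (D : V → V → Prop) (M : Finset (V × V)) : Prop :=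
  (∀ e ∈ M, D e.1 e.2) ∧
    ∀ e ∈ M, ∀ f ∈ M, e ≠ f →
      ∀ x, (x = e.1 ∨ x = e.2) → ∀ y, (y = f.1 ∨ y = f.2) → x ≠ y ∧ ¬D x y

/-- `ν(D)`: the maximum size of an induced matching in the digraph `D`. -/
noncomputable def nu {V : Type} (D : V → V → Prop) : ℕ :=
  sSup {n | ∃ M : Finset (V × V), IsIndMatching D M ∧ M.card = n}

/-- The bipartite digraph `G[A→B]`, whose edges are the edges of `E` from `A` to `B`. -/
def cutRel {V : Type} (E : V → V → Prop) (A B : Set V) : V → V → Prop :=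
  fun x y => x ∈ A ∧ y ∈ B ∧ E x y

/-- `bimim_G(A) = ν(G[A→Ā]) + ν(G[Ā→A])`. -/
noncomputable def bimimCut {V : Type} (E : V → V → Prop) (A : Set V) : ℕ :=
  nu (cutRel E A Aᶜ) + nu (cutRel E Aᶜ A)

/-- For an undirected graph `G`, `mim_G(A) = ν(G[A, Ā])`. -/
noncomputable def mimCut {V : Type} (G : SimpleGraph V) (A : Set V) : ℕ :=
  nu (cutRel G.Adj A Aᶜ)
/-- A caterpillar: a tree containing a path such that every vertex outside the path
has a neighbor on the path. -/
def IsCaterpillar {L : Type} (T : SimpleGraph L) : Prop :=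
  ∃ (u v : L) (p : T.Walk u v), p.IsPath ∧
    ∀ w : L, w ∉ p.support → ∃ x ∈ p.support, T.Adj w x

/-- A branch decomposition of a (di)graph on vertex set `V`: a subcubic tree (at least
two vertices, every internal vertex of degree 3) together with a bijection from `V`
to the set of leaves of the tree. -/
structure BranchDecomp (V : Type) where
  L : Type
  finL : Finite L
  T : SimpleGraph L
  isTree : T.IsTree
  two_le : 2 ≤ Nat.card L
  subcubic : ∀ t : L, (T.neighborSet t).ncard = 1 ∨ (T.neighborSet t).ncard = 3
  toLeaf : V → L
  inj : Function.Injective toLeaf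
  mem_leaf : ∀ v : V, (T.neighborSet (toLeaf v)).ncard = 1
  surj : ∀ t : L, (T.neighborSet t).ncard = 1 → ∃ v, toLeaf v = t

/-- The side `A_e` of the cut induced by the tree edge `{t₁, t₂}`: the set of vertices
mapped to leaves in the component of `T - e` containing `t₁`. -/
def BranchDecomp.side {V : Type} (bd : BranchDecomp V) (t₁ t₂ : bd.L) : Set V :=
  {v | (bd.T.deleteEdges {s(t₁, t₂)}).Reachable t₁ (bd.toLeaf v)}

/-- The bi-mim-width of a branch decomposition with respect to a digraph. -/
noncomputable def BranchDecomp.width {V : Type} (bd : BranchDecomp V)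
    (E : V → V → Prop) : ℕ :=
  sSup {n | ∃ t₁ t₂, bd.T.Adj t₁ t₂ ∧ n = bimimCut E (bd.side t₁ t₂)}

/-- The mim-width of a branch decomposition with respect to an undirected graph. -/
noncomputable def BranchDecomp.uwidth {V : Type} (bd : BranchDecomp V)
    (G : SimpleGraph V) : ℕ :=
  sSup {n | ∃ t₁ t₂, bd.T.Adj t₁ t₂ ∧ n = mimCut G (bd.side t₁ t₂)}

/-- The bi-mim-width of a digraph. -/
noncomputable def bimimw {V : Type} (E : V → V → Prop) : ℕ :=
  sInf {n | ∃ bd : BranchDecomp V, bd.width E = n}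

/-- The linear bi-mim-width of a digraph. -/
noncomputable def lbimimw {V : Type} (E : V → V → Prop) : ℕ :=
  sInf {n | ∃ bd : BranchDecomp V, IsCaterpillar bd.T ∧ bd.width E = n}

/-- The mim-width of an undirected graph. -/
noncomputable def mimw {V : Type} (G : SimpleGraph V) : ℕ :=
  sInf {n | ∃ bd : BranchDecomp V, bd.uwidth G = n}

/-- The linear mim-width of an undirected graph. -/
noncomputable def lmimw {V : Type} (G : SimpleGraph V) : ℕ :=
  sInf {n | ∃ bd : BranchDecomp V, IsCaterpillar bd.T ∧ bd.uwidth G = n}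
/-- The `r`-th power of a digraph: there is an edge `(x, y)` whenever there is a
directed path of length at least 1 and at most `r` from `x` to `y`. -/
def dipower {V : Type} (E : V → V → Prop) (r : ℕ) : V → V → Prop :=
  fun x y => ∃ (k : ℕ) (p : Fin (k + 1) → V), 1 ≤ k ∧ k ≤ r ∧
    Function.Injective p ∧ (∀ i : Fin k, E (p i.castSucc) (p i.succ)) ∧
    p 0 = x ∧ p (Fin.last k) = y

/-!
An induced matching of `G^r[A→Ā]` pairs vertices `x ∈ A`, `y ∉ A` joined by walks of at most `r`
edges, and each such walk leaves `A` along an edge `(a, b)` whose tail `a` is its `i`-th vertex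
for some `i < r`. For the pairs sharing the same `i`, the edges `(a, b)` form an induced matching
of `G[A→Ā]`: an edge `a → b'` between two of them would splice the two walks into a walk
`x ⇝ a → b' ⇝ y'` of at most `r` edges, so `(x, y')` would be an edge of `G^r`, against
inducedness. (A shortest walk is a path, so walks may replace paths in the definition of `G^r`.)
Hence `ν(G^r[A→Ā]) ≤ r · ν(G[A→Ā])`, and the same for `Ā → A`, cut by cut.
-/

section

variable {V : Type}

-- A walk is listed by its vertices, so it has `l.length - 1` edges.
def IsWalk (E : V → V → Prop) (x y : V) (l : List V) : Prop :=
  l.IsChain E ∧ l.head? = some x ∧ l.getLast? = some y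

lemma IsWalk.exists_nodup_sublist {E : V → V → Prop} {x y : V} {l : List V}
    (h : IsWalk E x y l) : ∃ l', l'.Sublist l ∧ IsWalk E x y l' ∧ l'.Nodup := by
  induction l generalizing x with
  | nil => simp [IsWalk] at h
  | cons a t ih =>
    obtain ⟨hc, hx, hy⟩ := h
    obtain rfl : a = x := by simpa using hx
    rcases t with _ | ⟨z, t⟩
    · exact ⟨[a], .refl _, ⟨hc, hx, hy⟩, List.nodup_singleton a⟩
    obtain ⟨t', ht', ⟨hc', hz', hy'⟩, hnd'⟩ :=
      ih (x := z) ⟨hc.tail, rfl, by simpa using hy⟩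
    by_cases hat : a ∈ t'
    · obtain ⟨p, s, rfl⟩ := List.append_of_mem hat
      refine ⟨a :: s, ((List.sublist_append_right p _).trans ht').cons _, ⟨?_, rfl, ?_⟩,
        hnd'.sublist (List.sublist_append_right p _)⟩
      · exact hc'.right_of_append
      · simpa [List.getLast?_append] using hy'
    · refine ⟨a :: t', ht'.cons_cons a, ⟨?_, rfl, ?_⟩, List.nodup_cons.2 ⟨hat, hnd'⟩⟩
      · exact hc'.cons (by simpa [hz'] using hc.rel_head?)
      · rcases t' with _ | ⟨b, t'⟩
        · simp at hz'
        · simpa using hy'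

lemma dipower_iff_exists_isWalk {E : V → V → Prop} {r : ℕ} {x y : V} :
    dipower E r x y ↔ x ≠ y ∧ ∃ l, IsWalk E x y l ∧ l.length ≤ r + 1 := by
  constructor
  · rintro ⟨k, p, hk, hkr, hinj, hE, rfl, rfl⟩
    have h0k : (0 : Fin (k + 1)) ≠ Fin.last k :=
      Fin.ext_iff.not.2 (by simp only [Fin.val_zero, Fin.val_last]; omega)
    refine ⟨hinj.ne h0k, List.ofFn p, ⟨?_, ?_, ?_⟩, by simpa⟩
    · exact List.isChain_ofFn.2 fun i hi => hE ⟨i, by omega⟩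
    · simp
    · simp only [List.getLast?_eq_getElem?, List.length_ofFn, List.getElem?_ofFn]
      simp [Fin.last]
  · rintro ⟨hxy, l, hl, hlen⟩
    obtain ⟨l', hl', ⟨hc, hx, hy⟩, hnd⟩ := IsWalk.exists_nodup_sublist hl
    obtain ⟨k, hk⟩ : ∃ k, l'.length = k + 1 :=
      Nat.exists_eq_add_one.2 (List.length_pos_iff.2 (by rintro rfl; simp at hx))
    have hk1 : 1 ≤ k := by
      by_contra! hk0
      obtain ⟨z, rfl⟩ := List.length_eq_one_iff.1 (show l'.length = 1 by omega)
      simp_all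
    refine ⟨k, fun i => l'[i.1], hk1, by have := hl'.length_le; omega, ?_, ?_, ?_, ?_⟩
    · intro i j hij
      exact Fin.ext ((List.Nodup.getElem_inj_iff hnd).1 hij)
    · exact fun i => List.isChain_iff_getElem.1 hc i (by omega)
    · simpa [List.head?_eq_getElem?, List.getElem?_eq_getElem (show 0 < l'.length by omega)]
        using hx
    · simpa [List.getLast?_eq_getElem?, hk] using hy

lemma List.exists_eq_append_cons_cons_mem_notMem {α : Type*} {S : Set α} {l : List α} {x y : α}
    (hx : l.head? = some x) (hy : l.getLast? = some y) (hxS : x ∈ S) (hyS : y ∉ S) :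
    ∃ p a b s, l = p ++ a :: b :: s ∧ a ∈ S ∧ b ∉ S := by
  by_contra! h
  have hc : l.IsChain (fun a b => a ∈ S → b ∈ S) :=
    List.isChain_iff_forall_rel_of_append_cons_cons.2 fun a b p s hl => h p a b s hl
  refine hyS (hc.induction (· ∈ S) l (fun _ _ hab ha => hab ha) (fun hl => ?_) y
    (List.mem_of_getLast? hy))
  rw [List.head?_eq_some_head hl, Option.some_inj] at hx
  exact hx ▸ hxS

lemma IsWalk.splice {E : V → V → Prop} {x y x' y' a b a' b' : V} {p s p' s' : List V}
    (h : IsWalk E x y (p ++ a :: b :: s)) (h' : IsWalk E x' y' (p' ++ a' :: b' :: s'))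
    (hab' : E a b') : IsWalk E x y' (p ++ a :: b' :: s') := by
  obtain ⟨hc, hx, -⟩ := h
  obtain ⟨hc', -, hy'⟩ := h'
  rw [List.isChain_append_cons_cons] at hc hc'
  refine ⟨List.isChain_append_cons_cons.2 ⟨hc.1, hab', hc'.2.2⟩, ?_, ?_⟩
  · simpa [List.head?_append] using hx
  · simpa [List.getLast?_append] using hy'

lemma card_le_nu [Finite V] {D : V → V → Prop} {M : Finset (V × V)} (h : IsIndMatching D M) :
    M.card ≤ nu D := by
  have := Fintype.ofFinite V
  exact le_csSup ⟨Fintype.card (V × V), fun _ ⟨N, _, hN⟩ => hN ▸ N.card_le_univ⟩ ⟨M, h, rfl⟩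

lemma nu_le {D : V → V → Prop} {n : ℕ}
    (h : ∀ M : Finset (V × V), IsIndMatching D M → M.card ≤ n) : nu D ≤ n :=
  csSup_le' fun _ ⟨M, hM, hMn⟩ => hMn ▸ h M hM

lemma card_le_nu_cutRel [Finite V] {ι : Type*} {E : V → V → Prop} {S : Set V} {F : Finset ι}
    {a b : ι → V} (ha : ∀ i ∈ F, a i ∈ S) (hb : ∀ i ∈ F, b i ∉ S)
    (hab : ∀ i ∈ F, E (a i) (b i)) (hcross : ∀ i ∈ F, ∀ j ∈ F, i ≠ j → ¬E (a i) (b j)) :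
    F.card ≤ nu (cutRel E S Sᶜ) := by
  have hinj : Set.InjOn (fun i => (a i, b i)) F := by
    intro i hi j hj hij
    by_contra hne
    exact hcross i hi j hj hne ((Prod.mk.inj hij).2 ▸ hab i hi)
  rw [← Finset.card_image_of_injOn hinj]
  refine card_le_nu ⟨?_, ?_⟩
  · simp only [Finset.mem_image]
    rintro _ ⟨i, hi, rfl⟩
    exact ⟨ha i hi, hb i hi, hab i hi⟩
  · simp only [Finset.mem_image]
    rintro _ ⟨i, hi, rfl⟩ _ ⟨j, hj, rfl⟩ hne u hu v hv
    have hij : i ≠ j := fun h => hne (h ▸ rfl)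
    have hai := ha i hi; have haj := ha j hj; have hbi := hb i hi; have hbj := hb j hj
    have habj := hab j hj; have hcij := hcross i hi j hj hij
    rcases hu with rfl | rfl <;> rcases hv with rfl | rfl <;>
      simp only [cutRel, Set.mem_compl_iff, not_and]
    · exact ⟨fun h => hcij (h ▸ habj), fun _ h => absurd haj h⟩
    · exact ⟨fun h => hbj (h ▸ hai), fun _ _ => hcij⟩
    · exact ⟨fun h => hbi (h ▸ haj), fun h => absurd h hbi⟩
    · exact ⟨fun h => hcij (h ▸ hab i hi), fun h => absurd h hbi⟩

lemma nu_cutRel_dipower_le [Finite V] (E : V → V → Prop) (r : ℕ) (S : Set V) :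
    nu (cutRel (dipower E r) S Sᶜ) ≤ r * nu (cutRel E S Sᶜ) := by
  refine nu_le fun M hM => ?_
  have hcrossing : ∀ e : M, ∃ p a b s, IsWalk E e.1.1 e.1.2 (p ++ a :: b :: s) ∧
      (p ++ a :: b :: s).length ≤ r + 1 ∧ a ∈ S ∧ b ∉ S := by
    rintro ⟨e, he⟩
    obtain ⟨hxS, hyS, hxy⟩ := hM.1 e he
    obtain ⟨-, l, hl, hlen⟩ := dipower_iff_exists_isWalk.1 hxy
    obtain ⟨p, a, b, s, rfl, haS, hbS⟩ :=
      List.exists_eq_append_cons_cons_mem_notMem hl.2.1 hl.2.2 hxS hyS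
    exact ⟨p, a, b, s, hl, hlen, haS, hbS⟩
  choose p a b s hwalk hlen ha hb using hcrossing
  have hp : ∀ e, (p e).length < r := fun e => by
    have := hlen e
    simp only [List.length_append, List.length_cons] at this
    omega
  have hcross : ∀ e f : M, e ≠ f → (p e).length = (p f).length → ¬E (a e) (b f) := by
    intro e f hef hpef hE
    obtain ⟨hne, hnot⟩ :=
      hM.2 e e.2 f f.2 (Subtype.coe_ne_coe.2 hef) _ (Or.inl rfl) _ (Or.inr rfl)
    refine hnot ⟨(hM.1 e e.2).1, (hM.1 f f.2).2.1, dipower_iff_exists_isWalk.2 ⟨hne, _,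
      (hwalk e).splice (hwalk f) hE, ?_⟩⟩
    simpa [hpef] using hlen f
  rw [← Finset.card_attach, mul_comm, ← Finset.card_range r]
  refine Finset.card_le_mul_card_image_of_maps_to (f := fun e => (p e).length)
    (fun e _ => Finset.mem_range.2 (hp e)) _ fun i _ => ?_
  refine card_le_nu_cutRel (fun e _ => ha e) (fun e _ => hb e)
    (fun e _ => (List.isChain_append_cons_cons.1 (hwalk e).1).2.1) fun e he f hf hef => ?_
  simp only [Finset.mem_filter] at he hf
  exact hcross e f hef (he.2.trans hf.2.symm)

lemma bimimCut_dipower_le [Finite V] (E : V → V → Prop) (r : ℕ) (A : Set V) :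
    bimimCut (dipower E r) A ≤ r * bimimCut E A := by
  have h := nu_cutRel_dipower_le E r Aᶜ
  rw [compl_compl] at h
  rw [bimimCut, bimimCut, mul_add]
  exact add_le_add (nu_cutRel_dipower_le E r A) h

lemma BranchDecomp.finite (bd : BranchDecomp V) : Finite V :=
  have := bd.finL
  Finite.of_injective _ bd.inj

lemma BranchDecomp.bimimCut_side_le_width (bd : BranchDecomp V) (E : V → V → Prop)
    {t₁ t₂ : bd.L} (h : bd.T.Adj t₁ t₂) : bimimCut E (bd.side t₁ t₂) ≤ bd.width E :=
  have := bd.finL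
  le_csSup ((Set.finite_range fun t : bd.L × bd.L => bimimCut E (bd.side t.1 t.2)).bddAbove.mono
    (by rintro _ ⟨t₁, t₂, -, rfl⟩; exact ⟨(t₁, t₂), rfl⟩)) ⟨t₁, t₂, h, rfl⟩

lemma BranchDecomp.width_dipower_le (bd : BranchDecomp V) (E : V → V → Prop) (r : ℕ) :
    bd.width (dipower E r) ≤ r * bd.width E := by
  have := bd.finite
  refine csSup_le' ?_
  rintro _ ⟨t₁, t₂, h, rfl⟩
  exact (bimimCut_dipower_le E r _).trans (Nat.mul_le_mul_left r (bd.bimimCut_side_le_width E h))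

lemma bimimw_dipower_le (E : V → V → Prop) (r : ℕ) : bimimw (dipower E r) ≤ r * bimimw E := by
  by_cases h : ∃ bd : BranchDecomp V, bd.width E = bimimw E
  · obtain ⟨bd, hbd⟩ := h
    calc bimimw (dipower E r) ≤ bd.width (dipower E r) := Nat.sInf_le ⟨bd, rfl⟩
      _ ≤ r * bimimw E := hbd ▸ bd.width_dipower_le E r
  -- Without any branch decomposition both sides are `sInf ∅ = 0`.
  · have : IsEmpty (BranchDecomp V) :=
      ⟨fun bd => h (Nat.sInf_mem (s := {n | ∃ bd : BranchDecomp V, bd.width E = n})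
        ⟨_, bd, rfl⟩)⟩
    simp [bimimw]

end

theorem stmt_7_general {V : Type} (E : V → V → Prop) (r w : ℕ) :
    (∀ bd : BranchDecomp V, bd.width E ≤ w → bd.width (dipower E r) ≤ r * w) ∧
      bimimw (dipower E r) ≤ r * bimimw E :=
  ⟨fun bd hbd => (bd.width_dipower_le E r).trans (Nat.mul_le_mul_left r hbd),
    bimimw_dipower_le E r⟩

theorem stmt_7 {V : Type} [Fintype V] (E : V → V → Prop) (r w : ℕ)
    (hr : 1 ≤ r) (hw : 1 ≤ w) :
    (∀ bd : BranchDecomp V, bd.width E ≤ w → bd.width (dipower E r) ≤ r * w) ∧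
      bimimw (dipower E r) ≤ r * bimimw E :=
  stmt_7_general E r w
end

section
/- Let G be an adjusted permutation digraph with at least two vertices; that is, for each v ∈ V(G) there are reals α_v, β_v, γ_v such that, with S_v the closed line segment in ℝ² from (α_v, 0) to (β_v, 1) and T_v the closed line segment from (α_v, 0) to (γ_v, 1), one has (v, w) ∈ E(G) ⇔ S_v ∩ T_w ≠ ∅. Then lbimimw(G) ≤ 4. -/
/-
Two segments `S_v`, `T_w` meet iff `(α v - α w) * (β v - γ w) ≤ 0`. Sort the vertices by `α` and
hang them, in that order, on the leaves of a caterpillar. Every cut of this decomposition either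
isolates one vertex, so `bimim ≤ 1 + 1`, or splits off an `α`-prefix `A`. For distinct edges
`(x, y)`, `(x', y')` of an induced matching from `A` to `Aᶜ`, the missing edge `(x, y')` forces
`α x < α y'` and `β x < γ y'`. Hence every matching edge except the one whose head has least `γ`
has `α x = α y`, and two such edges would give `α x < α y' = α x' < α y = α x`: at most two
edges. Negating `α, β, γ` turns `Aᶜ` into a prefix and bounds the matchings from `Aᶜ` to `A`.
-/

open scoped Classical

lemma mem_segment_zero_one_iff {a b : ℝ} {p : ℝ × ℝ} :
    p ∈ segment ℝ ((a, 0) : ℝ × ℝ) (b, 1) ↔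
      ∃ θ ∈ Set.Icc (0 : ℝ) 1, p = ((1 - θ) * a + θ * b, θ) := by
  simp [segment_eq_image, eq_comm, Prod.ext_iff]

lemma zero_mem_segment_iff_mul_nonpos {x y : ℝ} : (0 : ℝ) ∈ segment ℝ x y ↔ x * y ≤ 0 := by
  rw [segment_eq_uIcc, Set.mem_uIcc, mul_nonpos_iff]
  tauto

theorem segment_inter_segment_nonempty_iff (a b a' c : ℝ) :
    (segment ℝ ((a, 0) : ℝ × ℝ) (b, 1) ∩ segment ℝ ((a', 0) : ℝ × ℝ) (c, 1)).Nonempty ↔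
      (a - a') * (b - c) ≤ 0 := by
  rw [← zero_mem_segment_iff_mul_nonpos, segment_eq_image ℝ (a - a')]
  constructor
  · rintro ⟨p, hp, hp'⟩
    obtain ⟨θ, hθ, rfl⟩ := mem_segment_zero_one_iff.1 hp
    obtain ⟨τ, -, hτ⟩ := mem_segment_zero_one_iff.1 hp'
    obtain ⟨hx, rfl⟩ := Prod.ext_iff.1 hτ
    exact ⟨θ, hθ, by simp only [smul_eq_mul] at hx ⊢; linarith⟩
  · rintro ⟨θ, hθ, h⟩
    refine ⟨((1 - θ) * a + θ * b, θ), mem_segment_zero_one_iff.2 ⟨θ, hθ, rfl⟩,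
      mem_segment_zero_one_iff.2 ⟨θ, hθ, ?_⟩⟩
    simp only [smul_eq_mul] at h
    ext <;> simp only; linarith

section InducedMatching

variable {V : Type} {D : V → V → Prop} {M : Finset (V × V)} {e f : V × V}

lemma nu_le_of_forall_card_le {k : ℕ} (h : ∀ M, IsIndMatching D M → M.card ≤ k) : nu D ≤ k :=
  csSup_le' <| by
    rintro _ ⟨M, hM, rfl⟩
    exact h M hM

lemma IsIndMatching.fst_ne_fst (hM : IsIndMatching D M) (he : e ∈ M) (hf : f ∈ M)
    (hef : e ≠ f) : e.1 ≠ f.1 :=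
  (hM.2 e he f hf hef _ (.inl rfl) _ (.inl rfl)).1

lemma IsIndMatching.snd_ne_snd (hM : IsIndMatching D M) (he : e ∈ M) (hf : f ∈ M)
    (hef : e ≠ f) : e.2 ≠ f.2 :=
  (hM.2 e he f hf hef _ (.inr rfl) _ (.inr rfl)).1

lemma IsIndMatching.not_rel_fst_snd (hM : IsIndMatching D M) (he : e ∈ M) (hf : f ∈ M)
    (hef : e ≠ f) : ¬D e.1 f.2 :=
  (hM.2 e he f hf hef _ (.inl rfl) _ (.inr rfl)).2

lemma nu_le_one_of_forall_fst_eq (v : V) (h : ∀ x y, D x y → x = v) : nu D ≤ 1 :=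
  nu_le_of_forall_card_le fun M hM => Finset.card_le_one.2 fun e he f hf => by
    by_contra hef
    exact hM.fst_ne_fst he hf hef ((h _ _ (hM.1 e he)).trans (h _ _ (hM.1 f hf)).symm)

lemma nu_le_one_of_forall_snd_eq (v : V) (h : ∀ x y, D x y → y = v) : nu D ≤ 1 :=
  nu_le_of_forall_card_le fun M hM => Finset.card_le_one.2 fun e he f hf => by
    by_contra hef
    exact hM.snd_ne_snd he hf hef ((h _ _ (hM.1 e he)).trans (h _ _ (hM.1 f hf)).symm)

end InducedMatching

section BimimCut

variable {V : Type} (E : V → V → Prop)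

lemma bimimCut_compl (A : Set V) : bimimCut E Aᶜ = bimimCut E A := by
  rw [bimimCut, bimimCut, compl_compl, Nat.add_comm]

lemma bimimCut_singleton_le_two (v : V) : bimimCut E {v} ≤ 2 :=
  Nat.add_le_add (nu_le_one_of_forall_fst_eq v fun _ _ h => h.1)
    (nu_le_one_of_forall_snd_eq v fun _ _ h => h.2.1)

variable {E} {α β γ : V → ℝ}

theorem nu_cutRel_le_two (hE : ∀ v w, E v w ↔ (α v - α w) * (β v - γ w) ≤ 0) {A : Set V}
    (hA : ∀ v ∈ A, ∀ w ∉ A, α v ≤ α w) : nu (cutRel E A Aᶜ) ≤ 2 := by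
  refine nu_le_of_forall_card_le fun M hM => ?_
  have hcross : ∀ e ∈ M, ∀ f ∈ M, e ≠ f → α e.1 < α f.2 ∧ β e.1 < γ f.2 := by
    intro e he f hf hef
    have hle := hA _ (hM.1 e he).1 _ (hM.1 f hf).2.1
    have hpos : 0 < (α e.1 - α f.2) * (β e.1 - γ f.2) := by
      rw [← not_le, ← hE]
      exact fun h => hM.not_rel_fst_snd he hf hef ⟨(hM.1 e he).1, (hM.1 f hf).2.1, h⟩
    have hlt : α e.1 < α f.2 := hle.lt_of_ne fun h => by simp [h] at hpos
    exact ⟨hlt, by nlinarith⟩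
  have hflat : ∀ e ∈ M, ∀ f ∈ M, e ≠ f → γ e.2 ≤ γ f.2 → α f.1 = α f.2 := by
    intro e he f hf hef hγ
    have hle := hA _ (hM.1 f hf).1 _ (hM.1 f hf).2.1
    have hrel := (hE _ _).1 (hM.1 f hf).2.2
    have hβγ := (hcross f hf e he hef.symm).2
    nlinarith
  rcases M.eq_empty_or_nonempty with rfl | hne
  · simp
  obtain ⟨e, he, hmin⟩ := M.exists_min_image (fun e => γ e.2) hne
  have hrest : (M.erase e).card ≤ 1 := Finset.card_le_one.2 fun f hf g hg => by
    by_contra hfg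
    obtain ⟨hfe, hf⟩ := Finset.mem_erase.1 hf
    obtain ⟨hge, hg⟩ := Finset.mem_erase.1 hg
    have hf_flat := hflat e he f hf (Ne.symm hfe) (hmin f hf)
    have hg_flat := hflat e he g hg (Ne.symm hge) (hmin g hg)
    linarith [(hcross f hf g hg hfg).1, (hcross g hg f hf (Ne.symm hfg)).1]
  have := Finset.card_erase_add_one he
  omega

theorem bimimCut_le_four (hE : ∀ v w, E v w ↔ (α v - α w) * (β v - γ w) ≤ 0) {A : Set V}
    (hA : ∀ v ∈ A, ∀ w ∉ A, α v ≤ α w) : bimimCut E A ≤ 4 := by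
  have hE' : ∀ v w, E v w ↔ ((-α) v - (-α) w) * ((-β) v - (-γ) w) ≤ 0 := fun v w => by
    simp only [hE, Pi.neg_apply]; ring_nf
  have hAc : ∀ v ∈ Aᶜ, ∀ w ∉ Aᶜ, (-α) v ≤ (-α) w := fun v hv w hw =>
    neg_le_neg (hA w (not_not.1 hw) v hv)
  have := nu_cutRel_le_two hE' hAc
  rw [compl_compl] at this
  exact Nat.add_le_add (nu_cutRel_le_two hE hA) this

end BimimCut

namespace SimpleGraph

variable {W : Type} {G : SimpleGraph W} {S : Set W} {a b u w : W}

def IsSoleExit (G : SimpleGraph W) (S : Set W) (a b : W) : Prop :=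
  a ∈ S ∧ b ∉ S ∧ ∀ x y, G.Adj x y → x ∈ S → y ∉ S → x = a ∧ y = b

lemma IsSoleExit.compl (h : G.IsSoleExit S a b) : G.IsSoleExit Sᶜ b a :=
  ⟨h.2.1, not_not.2 h.1, fun x y hxy hx hy => (h.2.2 y x hxy.symm (not_not.1 hy) hx).symm⟩

lemma IsSoleExit.mem_of_reachable (h : G.IsSoleExit S a b)
    (hr : (G.deleteEdges {s(a, b)}).Reachable u w) (hu : u ∈ S) : w ∈ S := by
  obtain ⟨p⟩ := hr
  induction p with
  | nil => exact hu
  | @cons x y _ hadj _ ih =>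
    obtain ⟨hxy, hne⟩ := deleteEdges_adj.1 hadj
    refine ih (by_contra fun hy => hne ?_)
    obtain ⟨rfl, rfl⟩ := h.2.2 x y hxy hu hy
    rfl

lemma IsSoleExit.isBridge (h : G.IsSoleExit S a b) : G.IsBridge s(a, b) :=
  isBridge_iff.2 fun hr => h.2.1 (h.mem_of_reachable hr h.1)

lemma IsSoleExit.mem_support (h : G.IsSoleExit S a b) (p : G.Walk u w) (hu : u ∈ S)
    (hw : w ∉ S) : b ∈ p.support := by
  induction p with
  | nil => exact absurd hu hw
  | @cons x y _ hxy p ih =>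
    by_cases hy : y ∈ S
    · exact List.mem_cons_of_mem _ (ih hy hw)
    · obtain ⟨-, rfl⟩ := h.2.2 x y hxy hu hy
      exact List.mem_cons_of_mem _ p.start_mem_support

lemma Connected.reachable_deleteEdges_or (hG : G.Connected) (a b x : W) :
    (G.deleteEdges {s(a, b)}).Reachable a x ∨ (G.deleteEdges {s(a, b)}).Reachable b x := by
  obtain ⟨p⟩ := hG.preconnected x a
  induction p with
  | nil => exact .inl .rfl
  | @cons u v a huv _ ih =>
    by_cases he : s(u, v) = s(a, b)
    · rcases Sym2.eq_iff.1 he with ⟨rfl, -⟩ | ⟨rfl, -⟩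
      · exact .inl .rfl
      · exact .inr .rfl
    · have hvu := (deleteEdges_adj.2 ⟨huv, mt Set.mem_singleton_iff.1 he⟩).reachable.symm
      exact ih.imp (·.trans hvu) (·.trans hvu)

end SimpleGraph

lemma BranchDecomp.side_eq_preimage {V : Type} (bd : BranchDecomp V) {S : Set bd.L}
    {t₁ t₂ : bd.L} (h : bd.T.IsSoleExit S t₁ t₂) : bd.side t₁ t₂ = bd.toLeaf ⁻¹' S := by
  ext v
  refine ⟨fun hv => h.mem_of_reachable hv h.1, fun hv => ?_⟩
  refine (bd.isTree.1.reachable_deleteEdges_or t₁ t₂ _).resolve_right fun hr => ?_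
  rw [Sym2.eq_swap] at hr
  exact h.compl.mem_of_reachable hr h.2.1 hv

lemma lbimimw_le_width {V : Type} (E : V → V → Prop) (bd : BranchDecomp V)
    (hbd : IsCaterpillar bd.T) : lbimimw E ≤ bd.width E :=
  Nat.sInf_le ⟨bd, hbd, rfl⟩

/-- The spine vertex carrying leaf `i` of the caterpillar below: leaves `0, 1` hang on spine
vertex `0`, leaf `i` on `i - 1`, and leaves `n - 2, n - 1` on the last spine vertex `n - 3`. -/
def att (n i : ℕ) : ℕ := min (i - 1) (n - 3)

lemma att_mono (n : ℕ) : Monotone (att n) :=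
  fun _ _ h => min_le_min_right _ (Nat.sub_le_sub_right h 1)

abbrev CaterpillarVert (n : ℕ) : Type := Fin n ⊕ Fin (n - 2)

open Sum

/-- The caterpillar with leaves `inl 0, …, inl (n - 1)` and spine `inr 0 — ⋯ — inr (n - 3)`;
for `n = 2` there is no spine and the two leaves are adjacent. -/
def caterpillar (n : ℕ) : SimpleGraph (CaterpillarVert n) where
  Adj
    | inl i, inl i' => n = 2 ∧ i ≠ i'
    | inl i, inr j | inr j, inl i => att n i = j
    | inr j, inr k => j.val + 1 = k ∨ k.val + 1 = j
  symm := ⟨by rintro (i | j) (i' | j') h <;> simp_all [eq_comm, or_comm]⟩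
  loopless := ⟨by rintro (i | j) h <;> simp_all⟩

namespace caterpillar

variable {n : ℕ}

@[simp] lemma adj_inl_inl {i i' : Fin n} :
    (caterpillar n).Adj (inl i) (inl i') ↔ n = 2 ∧ i ≠ i' := .rfl
@[simp] lemma adj_inl_inr {i : Fin n} {j : Fin (n - 2)} :
    (caterpillar n).Adj (inl i) (inr j) ↔ att n i = j := .rfl
@[simp] lemma adj_inr_inl {i : Fin n} {j : Fin (n - 2)} :
    (caterpillar n).Adj (inr j) (inl i) ↔ att n i = j := .rfl
@[simp] lemma adj_inr_inr {j k : Fin (n - 2)} :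
    (caterpillar n).Adj (inr j) (inr k) ↔ j.val + 1 = k ∨ k.val + 1 = j := .rfl

lemma adj_inl_unique {i : Fin n} {y z : CaterpillarVert n} (hy : (caterpillar n).Adj (inl i) y)
    (hz : (caterpillar n).Adj (inl i) z) : y = z := by
  rcases y with y | y <;> rcases z with z | z <;> simp only [adj_inl_inl, adj_inl_inr] at hy hz
  · exact congrArg inl (Fin.ext (by omega))
  · exact absurd z.isLt (by omega)
  · exact absurd y.isLt (by omega)
  · exact congrArg inr (Fin.ext (by omega))

lemma exists_adj_inl (hn : 2 ≤ n) (i : Fin n) : ∃ y, (caterpillar n).Adj (inl i) y := by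
  rcases hn.eq_or_lt with rfl | hn
  · exact ⟨inl ⟨1 - i, by omega⟩, rfl, by simp [Fin.ext_iff]; omega⟩
  · exact ⟨inr ⟨att n i, by unfold att; omega⟩, by simp⟩

lemma ncard_neighborSet_inl (hn : 2 ≤ n) (i : Fin n) :
    ((caterpillar n).neighborSet (inl i)).ncard = 1 := by
  obtain ⟨y, hy⟩ := exists_adj_inl hn i
  exact Set.ncard_eq_one.2
    ⟨y, Set.ext fun z => ⟨fun hz => adj_inl_unique hz hy, by rintro rfl; exact hy⟩⟩

lemma ncard_neighborSet_inr (j : Fin (n - 2)) :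
    ((caterpillar n).neighborSet (inr j)).ncard = 3 := by
  have hj := j.isLt
  rw [Set.ncard_eq_three]
  refine ⟨if j.val = 0 then inl ⟨0, by omega⟩ else inr ⟨j - 1, by omega⟩,
    if _ : j.val = n - 3 then inl ⟨n - 1, by omega⟩ else inr ⟨j + 1, by omega⟩,
    inl ⟨j + 1, by omega⟩, ?_, ?_, ?_, ?_⟩
  · split_ifs <;> simp [Fin.ext_iff]; omega
  · split_ifs <;> simp
  · split_ifs <;> simp [Fin.ext_iff]; omega
  · ext (i | k)
    · have := i.isLt
      split_ifs <;> simp [Fin.ext_iff, att] <;> omega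
    · have := k.isLt
      split_ifs <;> simp [Fin.ext_iff] <;> omega

def pos : CaterpillarVert n → ℕ := Sum.elim (fun i => att n i) (fun j => j)

lemma isSoleExit_inl {i : Fin n} {y : CaterpillarVert n} (h : (caterpillar n).Adj (inl i) y) :
    (caterpillar n).IsSoleExit {inl i} (inl i) y :=
  ⟨rfl, fun hy => h.ne hy.symm, fun _ _ hxz hx _ => ⟨hx, adj_inl_unique (hx ▸ hxz) h⟩⟩

lemma isSoleExit_inr {j k : Fin (n - 2)} (h : j.val + 1 = k) :
    (caterpillar n).IsSoleExit {x | pos x ≤ j} (inr j) (inr k) := by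
  refine ⟨Nat.le_refl j, by simp [pos]; omega, ?_⟩
  rintro (i | j') (i' | k') hadj hx hy <;> simp_all [pos, att, Fin.ext_iff]
  omega

lemma exists_isSoleExit {x y : CaterpillarVert n} (h : (caterpillar n).Adj x y) :
    ∃ S, (caterpillar n).IsSoleExit S x y ∧ ∃ T, (S = T ∨ S = Tᶜ) ∧
      ((∃ i, T = {inl i}) ∨ ∃ j : ℕ, T = {z | pos z ≤ j}) := by
  rcases x with i | j
  · exact ⟨_, isSoleExit_inl h, _, .inl rfl, .inl ⟨i, rfl⟩⟩
  rcases y with i | k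
  · exact ⟨_, (isSoleExit_inl h.symm).compl, _, .inr rfl, .inl ⟨i, rfl⟩⟩
  rcases h with h | h
  · exact ⟨_, isSoleExit_inr h, _, .inl rfl, .inr ⟨j, rfl⟩⟩
  · exact ⟨_, (isSoleExit_inr h).compl, _, .inr rfl, .inr ⟨k, rfl⟩⟩

lemma isAcyclic : (caterpillar n).IsAcyclic :=
  SimpleGraph.isAcyclic_iff_forall_adj_isBridge.2 fun _ _ h =>
    (exists_isSoleExit h).choose_spec.1.isBridge

lemma connected (hn : 2 ≤ n) : (caterpillar n).Connected := by
  have : Nonempty (CaterpillarVert n) := ⟨inl ⟨0, by omega⟩⟩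
  have hspine : ∀ j (hj : j < n - 2),
      (caterpillar n).Reachable (inl ⟨0, by omega⟩) (inr ⟨j, hj⟩) := by
    intro j hj
    induction j with
    | zero => exact SimpleGraph.Adj.reachable (by simp [att])
    | succ j ih => exact (ih (by omega)).trans (SimpleGraph.Adj.reachable (by simp))
  have hroot : ∀ x, (caterpillar n).Reachable (inl ⟨0, by omega⟩) x := by
    rintro (i | j)
    · by_cases hn2 : n = 2
      · subst hn2
        fin_cases i
        · rfl
        · exact SimpleGraph.Adj.reachable ⟨rfl, by simp⟩
      · exact (hspine (att n i) (by unfold att; omega)).trans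
          (SimpleGraph.Adj.reachable (by simp))
    · exact hspine j j.isLt
  exact ⟨fun x y => (hroot x).symm.trans (hroot y)⟩

lemma isTree (hn : 2 ≤ n) : (caterpillar n).IsTree := ⟨connected hn, isAcyclic⟩

lemma isCaterpillar (hn : 2 ≤ n) : IsCaterpillar (caterpillar n) := by
  obtain ⟨p⟩ := (connected hn).preconnected (inl ⟨0, by omega⟩) (inl ⟨n - 1, by omega⟩)
  have hspine : ∀ j, inr j ∈ p.bypass.support := by
    rintro ⟨_ | j, hj⟩
    · exact (isSoleExit_inl (y := inr ⟨0, hj⟩) (by simp [att])).mem_support _ rfl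
        (by simp [Fin.ext_iff]; omega)
    · exact (isSoleExit_inr (j := ⟨j, by omega⟩) (k := ⟨j + 1, hj⟩) rfl).mem_support _
        (by simp [pos, att]) (by simp [pos, att]; omega)
  refine ⟨_, _, p.bypass, p.bypass_isPath, ?_⟩
  rintro (i | j) hi
  · have h0 : i.val ≠ 0 := fun h => hi (by convert p.bypass.start_mem_support)
    have h1 : i.val ≠ n - 1 := fun h => hi (by convert p.bypass.end_mem_support)
    exact ⟨inr ⟨att n i, by unfold att; omega⟩, hspine _, by simp⟩
  · exact absurd (hspine j) hi

end caterpillar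

open caterpillar in
def caterpillarDecomp {V : Type} {n : ℕ} (e : Fin n ≃ V) (hn : 2 ≤ n) : BranchDecomp V where
  L := CaterpillarVert n
  finL := inferInstance
  T := caterpillar n
  isTree := isTree hn
  two_le := by simp only [Nat.card_eq_fintype_card, Fintype.card_sum, Fintype.card_fin]; omega
  subcubic := by
    rintro (i | j)
    exacts [.inl (ncard_neighborSet_inl hn i), .inr (ncard_neighborSet_inr j)]
  toLeaf v := inl (e.symm v)
  inj := inl_injective.comp e.symm.injective
  mem_leaf _ := ncard_neighborSet_inl hn _
  surj := by
    rintro (i | j) h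
    · exact ⟨e i, by simp⟩
    · simp [ncard_neighborSet_inr] at h

lemma caterpillarDecomp_width_le {V : Type} {n : ℕ} (e : Fin n ≃ V) (hn : 2 ≤ n)
    {E : V → V → Prop} {k : ℕ}
    (hcut : ∀ A : Set V, ((∃ v, A = {v}) ∨ ∃ j : ℕ, A = {v | att n (e.symm v) ≤ j}) →
      bimimCut E A ≤ k) :
    (caterpillarDecomp e hn).width E ≤ k := by
  refine csSup_le' ?_
  rintro _ ⟨t₁, t₂, h, rfl⟩
  obtain ⟨S, hS, T, hST, hT⟩ := caterpillar.exists_isSoleExit h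
  rw [BranchDecomp.side_eq_preimage _ hS]
  have hcutT := hcut ((caterpillarDecomp e hn).toLeaf ⁻¹' T) <| by
    rcases hT with ⟨i, rfl⟩ | ⟨j, rfl⟩
    · exact .inl ⟨e i, by ext v; simp [caterpillarDecomp, Equiv.symm_apply_eq]⟩
    · exact .inr ⟨j, rfl⟩
  rcases hST with rfl | rfl
  · exact hcutT
  · exact (bimimCut_compl E _).trans_le hcutT

lemma exists_equiv_fin_monotone {V : Type} [Fintype V] {β : Type*} [LinearOrder β]
    (f : V → β) :
    ∃ e : Fin (Fintype.card V) ≃ V, Monotone (f ∘ e) :=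
  ⟨(Tuple.sort (f ∘ (Fintype.equivFin V).symm)).trans (Fintype.equivFin V).symm,
    Tuple.monotone_sort (f ∘ (Fintype.equivFin V).symm)⟩

theorem stmt_11 {V : Type} [Fintype V] (h2 : 2 ≤ Nat.card V)
    (E : V → V → Prop) (α β γ : V → ℝ)
    (hrep : ∀ v w, E v w ↔
      (segment ℝ ((α v, 0) : ℝ × ℝ) ((β v, 1) : ℝ × ℝ) ∩
        segment ℝ ((α w, 0) : ℝ × ℝ) ((γ w, 1) : ℝ × ℝ)).Nonempty) :
    lbimimw E ≤ 4 := by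
  have hE : ∀ v w, E v w ↔ (α v - α w) * (β v - γ w) ≤ 0 := fun v w =>
    (hrep v w).trans (segment_inter_segment_nonempty_iff _ _ _ _)
  have hn : 2 ≤ Fintype.card V := Nat.card_eq_fintype_card (α := V) ▸ h2
  obtain ⟨e, he⟩ := exists_equiv_fin_monotone α
  refine (lbimimw_le_width E _ (caterpillar.isCaterpillar hn)).trans
    (caterpillarDecomp_width_le e hn fun A hA => ?_)
  rcases hA with ⟨v, rfl⟩ | ⟨j, rfl⟩
  · exact (bimimCut_singleton_le_two E v).trans (by norm_num)
  · refine bimimCut_le_four hE fun v hv w hw => ?_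
    have : e.symm v ≤ e.symm w := le_of_not_gt fun hlt => hw ((att_mono _ hlt.le).trans hv)
    simpa using he this
end
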